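/- arXiv:2008.08864 — 2 statements merged into one kernel-verified Lean document; each statement's English description precedes it below -/
import Mathlib

section
/- For every integer n ≥ 2, the number of bigrassmannian permutations in the symmetric group S_n equals the tetrahedral number (n−1)·n·(n+1)/6. -/
/-!
Extend `w ∈ S_n` to a permutation `σ` of `ℕ` fixing every `k ≥ n`; the right descents of `w`
become the `d` with `σ (d + 1) < σ d`, and the left descents of `w` those of `w⁻¹`. If `d` is
the only descent of `σ`, then `σ` is increasing on `[0, d]` and on `[d + 1, ∞)`. If moreover
`σ⁻¹` has a single descent, playing the two monotonicity constraints against each other shows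
that `σ` fixes everything below `a = σ (d + 1)` and from `c = σ d + 1` on, and exchanges the
blocks `[a, d + 1)` and `[d + 1, c)`. Hence bigrassmannian permutations of `S_n` correspond to
triples `a < b < c ≤ n`, i.e. to `3`-subsets of `{0, …, n}`, and there are
`C(n + 1, 3) = (n - 1) n (n + 1) / 6` of them.
-/

namespace Paper

/-- The simple transposition `s_i = (i, i+1)` (1-based) in `S_n`, realized as a
permutation of `Fin n`. For `i` outside `{1, …, n-1}` we set `s i = 1`. -/
def s (n i : ℕ) : Equiv.Perm (Fin n) :=
  if h : 1 ≤ i ∧ i < n then Equiv.swap ⟨i - 1, by omega⟩ ⟨i, by omega⟩ else 1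

/-- The length of a permutation: its number of inversions. -/
def len {n : ℕ} (w : Equiv.Perm (Fin n)) : ℕ :=
  (Finset.univ.filter (fun p : Fin n × Fin n => p.1 < p.2 ∧ w p.2 < w p.1)).card

/-- `i` is a left descent of `w` if `1 ≤ i ≤ n-1` and `ℓ(s_i w) < ℓ(w)`. -/
def IsLeftDescent {n : ℕ} (w : Equiv.Perm (Fin n)) (i : ℕ) : Prop :=
  1 ≤ i ∧ i ≤ n - 1 ∧ len (s n i * w) < len w

/-- `i` is a right descent of `w` if `1 ≤ i ≤ n-1` and `ℓ(w s_i) < ℓ(w)`. -/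
def IsRightDescent {n : ℕ} (w : Equiv.Perm (Fin n)) (i : ℕ) : Prop :=
  1 ≤ i ∧ i ≤ n - 1 ∧ len (w * s n i) < len w

/-- A permutation is bigrassmannian if it has exactly one left descent and
exactly one right descent. -/
def Bigrassmannian {n : ℕ} (w : Equiv.Perm (Fin n)) : Prop :=
  (∃! i, IsLeftDescent w i) ∧ (∃! j, IsRightDescent w j)

/-- One step of the Bruhat order: `w ⋖ t * w` for a transposition `t`
with `ℓ(w) < ℓ(t w)`. -/
def BruhatStep {n : ℕ} (w w' : Equiv.Perm (Fin n)) : Prop :=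
  ∃ a b : Fin n, a ≠ b ∧ w' = Equiv.swap a b * w ∧ len w < len w'

/-- The Bruhat order on `S_n`: the partial order generated by `w < tw` whenever
`t` is a transposition and `ℓ(w) < ℓ(tw)`. -/
def BruhatLE {n : ℕ} : Equiv.Perm (Fin n) → Equiv.Perm (Fin n) → Prop :=
  Relation.ReflTransGen BruhatStep

/-- Strict Bruhat order. -/
def BruhatLT {n : ℕ} (x y : Equiv.Perm (Fin n)) : Prop :=
  BruhatLE x y ∧ x ≠ y

/-- The product `s_a s_{a+1} ⋯ s_b` of consecutive simple transpositions. -/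
def ascRun (n a b : ℕ) : Equiv.Perm (Fin n) :=
  ((List.range (b + 1 - a)).map (fun t => s n (a + t))).prod

/-- For `i ≤ j`: `b(i,j,k) = (s_i ⋯ s_{j+k})(s_{i-1} ⋯ s_{j+k-1}) ⋯ (s_{i-k} ⋯ s_j)`. -/
def bAux (n i j k : ℕ) : Equiv.Perm (Fin n) :=
  ((List.range (k + 1)).map (fun m => ascRun n (i - m) (j + k - m))).prod

/-- The bigrassmannian permutation `b(i,j,k)`; for `j < i` it is `b(j,i,k)⁻¹`. -/
def b (n i j k : ℕ) : Equiv.Perm (Fin n) :=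
  if i ≤ j then bAux n i j k else (bAux n j i k)⁻¹

/-- The value `w(i)` of a permutation `w ∈ S_n` at `i ∈ {1, …, n}`, 1-based. -/
def act {n : ℕ} (w : Equiv.Perm (Fin n)) (i : ℕ) : ℕ :=
  if h : 1 ≤ i ∧ i ≤ n then ((w ⟨i - 1, by omega⟩ : Fin n) : ℕ) + 1 else i

/-- The essential set of a permutation `w ∈ S_n`. -/
def Ess {n : ℕ} (w : Equiv.Perm (Fin n)) : Set (ℕ × ℕ) :=
  {p | 1 ≤ p.1 ∧ p.1 ≤ n - 1 ∧ 1 ≤ p.2 ∧ p.2 ≤ n - 1 ∧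
    p.1 < act w⁻¹ p.2 ∧ p.2 < act w p.1 ∧
    act w (p.1 + 1) ≤ p.2 ∧ act w⁻¹ (p.2 + 1) ≤ p.1}

/-- The rank function `r_w(i,j) = |{k ≤ i : w(k) ≤ j}|` (1-based). -/
def rnk {n : ℕ} (w : Equiv.Perm (Fin n)) (i j : ℕ) : ℕ :=
  ((Finset.Icc 1 i).filter (fun k => act w k ≤ j)).card

/-- The co-rank function `t_w(i,j) = min{i,j} - r_w(i,j)`. -/
def cork {n : ℕ} (w : Equiv.Perm (Fin n)) (i j : ℕ) : ℕ :=
  min i j - rnk w i j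

/-- The set of bigrassmannian permutations `y ≤ w` in Bruhat order. -/
def BSet {n : ℕ} (w : Equiv.Perm (Fin n)) : Set (Equiv.Perm (Fin n)) :=
  {y | Bigrassmannian y ∧ BruhatLE y w}

/-- The set of Bruhat-maximal elements of `BSet w`. -/
def BM {n : ℕ} (w : Equiv.Perm (Fin n)) : Set (Equiv.Perm (Fin n)) :=
  {y ∈ BSet w | ∀ z ∈ BSet w, BruhatLE y z → z = y}

open Equiv Finset

section Length

variable {n : ℕ}

lemma len_inv (w : Perm (Fin n)) : len w⁻¹ = len w := by
  refine card_nbij' (fun p => (w⁻¹ p.2, w⁻¹ p.1)) (fun p => (w p.2, w p.1)) ?_ ?_ ?_ ?_ <;>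
    intro p <;> simp +contextual

lemma swap_apply_lt_swap_apply_iff {a b x y : Fin n} (hab : (a : ℕ) + 1 = b)
    (hxy : (x, y) ≠ (a, b)) (hyx : (x, y) ≠ (b, a)) :
    swap a b x < swap a b y ↔ x < y := by
  simp only [swap_apply_def, Fin.lt_def, ne_eq, Prod.mk.injEq, Fin.ext_iff] at *
  split_ifs <;> omega

/-- Right multiplication by `swap a b` permutes the inversions of `w` other than `(a, b)`. -/
lemma len_mul_swap_add_one (w : Perm (Fin n)) {a b : Fin n} (hab : (a : ℕ) + 1 = b)
    (h : w b < w a) : len (w * swap a b) + 1 = len w := by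
  have hlt : a < b := Fin.lt_def.2 (by omega)
  have hmem : (a, b) ∈ univ.filter (fun p : Fin n × Fin n => p.1 < p.2 ∧ w p.2 < w p.1) := by
    simp [hlt, h]
  rw [len, len, ← card_erase_add_one hmem]
  congr 1
  refine card_equiv ((swap a b).prodCongr (swap a b)) fun ⟨x, y⟩ => ?_
  rw [mem_filter, mem_erase, mem_filter]
  simp only [mem_univ, true_and, Perm.mul_apply, prodCongr_apply, Prod.map_apply]
  by_cases hyx : (x, y) = (b, a)
  · simp_all [hlt.not_gt]
  by_cases hxy : (x, y) = (a, b)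
  · simp_all [h.not_gt]
  have hne : (swap a b x, swap a b y) ≠ (a, b) := by
    simpa [swap_apply_eq_iff] using hyx
  simp [hne, swap_apply_lt_swap_apply_iff hab hxy hyx]

end Length

lemma s_inv (n i : ℕ) : (s n i)⁻¹ = s n i := by
  unfold s
  split_ifs <;> simp

section NatPerm

variable {n : ℕ}

/-- Unlike `act w`, this extension of `w` to `ℕ` is 0-based. -/
def natPerm (w : Perm (Fin n)) : Perm ℕ := w.extendDomain Fin.equivSubtype

@[simp]
lemma natPerm_apply_val (w : Perm (Fin n)) (x : Fin n) : natPerm w x = w x :=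
  w.extendDomain_apply_image Fin.equivSubtype x

lemma natPerm_apply_of_le (w : Perm (Fin n)) {k : ℕ} (hk : n ≤ k) : natPerm w k = k :=
  Perm.extendDomain_apply_not_subtype _ _ (by simpa using hk)

lemma natPerm_inv (w : Perm (Fin n)) : natPerm w⁻¹ = (natPerm w).symm := rfl

lemma natPerm_lt (w : Perm (Fin n)) {k : ℕ} (hk : k < n) : natPerm w k < n := by
  rw [show k = ((⟨k, hk⟩ : Fin n) : ℕ) from rfl, natPerm_apply_val]
  exact (w _).2

lemma natPerm_injective : Function.Injective (natPerm (n := n)) := fun w v h =>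
  Equiv.ext fun x => Fin.ext <| by rw [← natPerm_apply_val, ← natPerm_apply_val, h]

end NatPerm

def UniqueDescentAt (f : ℕ → ℕ) (d : ℕ) : Prop :=
  ∀ k, f (k + 1) < f k ↔ k = d

lemma isRightDescent_succ_iff {n : ℕ} (w : Perm (Fin n)) (d : ℕ) :
    IsRightDescent w (d + 1) ↔ natPerm w (d + 1) < natPerm w d := by
  rcases lt_or_ge (d + 1) n with hd | hd
  · set a : Fin n := ⟨d, by omega⟩
    set b : Fin n := ⟨d + 1, hd⟩
    have hab : (a : ℕ) + 1 = b := rfl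
    have hs : s n (d + 1) = swap a b := dif_pos ⟨by omega, hd⟩
    change _ ↔ natPerm w b < natPerm w a
    rw [natPerm_apply_val, natPerm_apply_val, Fin.val_fin_lt, IsRightDescent, hs]
    constructor
    · rintro ⟨-, -, hlen⟩
      refine lt_of_le_of_ne (not_lt.1 fun hlt => ?_) fun heq => ?_
      · have := len_mul_swap_add_one (w * swap a b) hab (by simpa using hlt)
        rw [mul_assoc, swap_mul_self, mul_one] at this
        omega
      · simpa [a, b] using w.injective heq
    · intro hlt
      have := len_mul_swap_add_one w hab hlt
      exact ⟨by omega, by omega, by omega⟩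
  · have hd' : ¬d + 1 ≤ n - 1 := by omega
    simp only [IsRightDescent, hd', false_and, and_false, false_iff, not_lt]
    rw [natPerm_apply_of_le w hd]
    rcases lt_or_ge d n with h | h
    · exact (natPerm_lt w h).le.trans (by omega)
    · rw [natPerm_apply_of_le w h]
      omega

lemma isLeftDescent_iff_isRightDescent_inv {n : ℕ} (w : Perm (Fin n)) (i : ℕ) :
    IsLeftDescent w i ↔ IsRightDescent w⁻¹ i := by
  rw [IsLeftDescent, IsRightDescent, ← len_inv (s n i * w), mul_inv_rev, s_inv, len_inv]

lemma existsUnique_iff_exists_forall_succ_iff {P : ℕ → Prop} (h0 : ¬P 0) :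
    (∃! i, P i) ↔ ∃ d, ∀ k, P (k + 1) ↔ k = d := by
  constructor
  · rintro ⟨i, hi, huniq⟩
    obtain ⟨d, rfl⟩ : ∃ d, i = d + 1 :=
      Nat.exists_eq_add_one_of_ne_zero (by rintro rfl; exact h0 hi)
    exact ⟨d, fun k => ⟨fun hk => by simpa using huniq _ hk, fun hk => hk ▸ hi⟩⟩
  · rintro ⟨d, hd⟩
    refine ⟨d + 1, (hd d).2 rfl, fun i hi => ?_⟩
    obtain ⟨k, rfl⟩ : ∃ k, i = k + 1 :=
      Nat.exists_eq_add_one_of_ne_zero (by rintro rfl; exact h0 hi)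
    rw [(hd k).1 hi]

lemma bigrassmannian_iff {n : ℕ} (w : Perm (Fin n)) :
    Bigrassmannian w ↔
      (∃ e, UniqueDescentAt (natPerm w).symm e) ∧ ∃ d, UniqueDescentAt (natPerm w) d := by
  have h0 : ∀ v : Perm (Fin n), ¬IsRightDescent v 0 := fun _ h => Nat.not_succ_le_zero 0 h.1
  rw [Bigrassmannian, ← natPerm_inv]
  simp only [isLeftDescent_iff_isRightDescent_inv,
    existsUnique_iff_exists_forall_succ_iff (h0 _), isRightDescent_succ_iff, UniqueDescentAt]

/-- The bijection of `ℕ` exchanging the blocks `[a, b)` and `[b, c)`. -/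
def blockRot (a b c k : ℕ) : ℕ :=
  if k < a then k else if k < b then k + (c - b) else if k < c then k - (b - a) else k

lemma blockRot_lt {a b c n k : ℕ} (hbc : b ≤ c) (hcn : c ≤ n) (hk : k < n) :
    blockRot a b c k < n := by
  unfold blockRot; split_ifs <;> omega

lemma blockRot_blockRot {a b c : ℕ} (hab : a ≤ b) (hbc : b ≤ c) (k : ℕ) :
    blockRot a (a + (c - b)) c (blockRot a b c k) = k := by
  unfold blockRot; split_ifs <;> omega

lemma uniqueDescentAt_blockRot {a b c : ℕ} (hab : a < b) (hbc : b < c) :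
    UniqueDescentAt (blockRot a b c) (b - 1) := by
  intro k; unfold blockRot; split_ifs <;> omega

namespace UniqueDescentAt

variable {σ : Perm ℕ} {d e N : ℕ}

lemma add_sub_le_apply (hσ : UniqueDescentAt σ d) {k l : ℕ} (hkl : k ≤ l)
    (hblock : l ≤ d ∨ d < k) : σ k + (l - k) ≤ σ l := by
  induction l, hkl using Nat.le_induction with
  | base => simp
  | succ l hkl ih =>
    have hstep : σ l < σ (l + 1) :=
      lt_of_le_of_ne (not_lt.1 fun h => by have := (hσ l).1 h; omega)
        (σ.injective.ne (by omega))
    have := ih (by omega)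
    omega

lemma le_apply (hσ : UniqueDescentAt σ d) {k : ℕ} (hk : k ≤ d) : k ≤ σ k := by
  have := hσ.add_sub_le_apply (Nat.zero_le k) (Or.inl hk)
  omega

lemma apply_le (hσ : UniqueDescentAt σ d) (hN : ∀ k, N ≤ k → σ k = k) {k : ℕ} (hk : d < k) :
    σ k ≤ k := by
  have := hσ.add_sub_le_apply (le_max_right N k) (Or.inr hk)
  rw [hN _ (le_max_left N k)] at this
  omega

/-- `σ⁻¹` maps `σ (d + 1)` to `d + 1` and `σ d > σ (d + 1)` to `d`, so it descends in between. -/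
lemma inv_descent_mem_Ico (hd : UniqueDescentAt σ d) (he : UniqueDescentAt σ.symm e) :
    σ (d + 1) ≤ e ∧ e < σ d := by
  have hlt : σ (d + 1) < σ d := (hd d).2 rfl
  constructor <;> by_contra h
  · have := he.add_sub_le_apply hlt.le (Or.inr (by omega))
    simp only [symm_apply_apply] at this
    omega
  · have := he.add_sub_le_apply hlt.le (Or.inl (by omega))
    simp only [symm_apply_apply] at this
    omega

lemma apply_eq_self_of_lt (hd : UniqueDescentAt σ d) (he : UniqueDescentAt σ.symm e) {v : ℕ}
    (hv : v < σ (d + 1)) : σ v = v := by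
  have hve : v ≤ e := by have := hd.inv_descent_mem_Ico he; omega
  have hle : v ≤ σ.symm v := he.le_apply hve
  have hfirst : σ.symm v ≤ d := by
    by_contra h
    have := hd.add_sub_le_apply (k := d + 1) (l := σ.symm v) (by omega) (Or.inr (by omega))
    simp only [apply_symm_apply] at this
    omega
  have hge := hd.le_apply hfirst
  rw [apply_symm_apply] at hge
  exact (σ.symm_apply_eq.1 (by omega)).symm

lemma apply_eq_self_of_gt (hd : UniqueDescentAt σ d) (he : UniqueDescentAt σ.symm e)
    (hN : ∀ k, N ≤ k → σ k = k) {v : ℕ} (hv : σ d < v) : σ v = v := by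
  have hN' : ∀ k, N ≤ k → σ.symm k = k := fun k hk => σ.symm_apply_eq.2 (hN k hk).symm
  have hev : e < v := by have := hd.inv_descent_mem_Ico he; omega
  have hle : σ.symm v ≤ v := he.apply_le hN' hev
  have hsecond : d < σ.symm v := by
    by_contra h
    have := hd.add_sub_le_apply (k := σ.symm v) (l := d) (by omega) (Or.inl le_rfl)
    simp only [apply_symm_apply] at this
    omega
  have hge := hd.apply_le hN hsecond
  rw [apply_symm_apply] at hge
  exact (σ.symm_apply_eq.1 (by omega)).symm

lemma apply_eq_of_le_descent (hd : UniqueDescentAt σ d) (he : UniqueDescentAt σ.symm e)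
    {k : ℕ} (hk : σ (d + 1) ≤ k) (hkd : k ≤ d) : σ k = k + (σ d - d) := by
  have hup := hd.add_sub_le_apply hkd (Or.inl le_rfl)
  have hdσ := hd.le_apply le_rfl
  rcases lt_or_ge e (σ k) with hv | hv
  · have := he.add_sub_le_apply (k := σ k) (l := σ d) (by omega) (Or.inr hv)
    simp only [symm_apply_apply] at this
    omega
  rcases le_or_gt (σ (d + 1)) (σ k) with hv' | hv'
  · have := he.add_sub_le_apply hv' (Or.inl hv)
    simp only [symm_apply_apply] at this
    omega
  · have := σ.injective (hd.apply_eq_self_of_lt he hv')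
    omega

lemma apply_eq_of_descent_lt (hd : UniqueDescentAt σ d) (he : UniqueDescentAt σ.symm e)
    (hN : ∀ k, N ≤ k → σ k = k) {k : ℕ} (hdk : d < k) (hk : k ≤ σ d) :
    σ k = σ (d + 1) + (k - (d + 1)) := by
  have hlow := hd.add_sub_le_apply (k := d + 1) (l := k) hdk (Or.inr (lt_add_one d))
  rcases le_or_gt (σ k) e with hv | hv
  · have := he.add_sub_le_apply (k := σ (d + 1)) (l := σ k) (by omega) (Or.inl hv)
    simp only [symm_apply_apply] at this
    omega
  rcases le_or_gt (σ k) (σ d) with hv' | hv'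
  · have := he.add_sub_le_apply hv' (Or.inr hv)
    simp only [symm_apply_apply] at this
    omega
  · have := σ.injective (hd.apply_eq_self_of_gt he hN hv')
    omega

theorem eq_blockRot (hd : UniqueDescentAt σ d) (he : UniqueDescentAt σ.symm e)
    (hN : ∀ k, N ≤ k → σ k = k) (k : ℕ) : σ k = blockRot (σ (d + 1)) (d + 1) (σ d + 1) k := by
  have hsucc := hd.apply_le hN (lt_add_one d)
  unfold blockRot
  split_ifs with h1 h2 h3
  · exact hd.apply_eq_self_of_lt he h1
  · rw [hd.apply_eq_of_le_descent he (not_lt.1 h1) (by omega)]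
    omega
  · rw [hd.apply_eq_of_descent_lt he hN (by omega) (by omega)]
    omega
  · exact hd.apply_eq_self_of_gt he hN (by omega)

end UniqueDescentAt

/-- `blockRot a b c` on `Fin n`; the identity unless `a ≤ b ≤ c ≤ n`. -/
def blockRotation (n a b c : ℕ) : Perm (Fin n) :=
  if h : a ≤ b ∧ b ≤ c ∧ c ≤ n then
    { toFun := fun k => ⟨blockRot a b c k, blockRot_lt h.2.1 h.2.2 k.2⟩
      invFun := fun k => ⟨blockRot a (a + (c - b)) c k, blockRot_lt (by omega) h.2.2 k.2⟩
      left_inv := fun k => Fin.ext (blockRot_blockRot h.1 h.2.1 k)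
      right_inv := fun k => Fin.ext <| by
        simpa [show a + (c - (a + (c - b))) = b by omega] using
          blockRot_blockRot (a := a) (b := a + (c - b)) (c := c) (by omega) (by omega) k }
  else 1

section BlockRotation

variable {n a b c : ℕ}

lemma coe_natPerm_blockRotation (hab : a ≤ b) (hbc : b ≤ c) (hc : c ≤ n) :
    ⇑(natPerm (blockRotation n a b c)) = blockRot a b c := by
  funext k
  rcases lt_or_ge k n with hk | hk
  · rw [show k = ((⟨k, hk⟩ : Fin n) : ℕ) from rfl, natPerm_apply_val]
    simp [blockRotation, hab, hbc, hc]
  · rw [natPerm_apply_of_le _ hk]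
    unfold blockRot; split_ifs <;> omega

lemma coe_natPerm_blockRotation_symm (hab : a ≤ b) (hbc : b ≤ c) (hc : c ≤ n) :
    ⇑(natPerm (blockRotation n a b c)).symm = blockRot a (a + (c - b)) c := by
  funext k
  rw [symm_apply_eq, coe_natPerm_blockRotation hab hbc hc]
  simpa [show a + (c - (a + (c - b))) = b by omega] using
    (blockRot_blockRot (a := a) (b := a + (c - b)) (c := c) (by omega) (by omega) k).symm

lemma bigrassmannian_blockRotation (hab : a < b) (hbc : b < c) (hc : c ≤ n) :
    Bigrassmannian (blockRotation n a b c) := by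
  rw [bigrassmannian_iff, coe_natPerm_blockRotation hab.le hbc.le hc,
    coe_natPerm_blockRotation_symm hab.le hbc.le hc]
  exact ⟨⟨_, uniqueDescentAt_blockRot (by omega) (by omega)⟩,
    ⟨_, uniqueDescentAt_blockRot hab hbc⟩⟩

lemma eq_of_blockRotation_eq {a' b' c' : ℕ} (hab : a < b) (hbc : b < c) (hc : c ≤ n)
    (hab' : a' < b') (hbc' : b' < c') (hc' : c' ≤ n)
    (h : blockRotation n a b c = blockRotation n a' b' c') : a = a' ∧ b = b' ∧ c = c' := by
  have hrot : blockRot a b c = blockRot a' b' c' := by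
    rw [← coe_natPerm_blockRotation hab.le hbc.le hc, h,
      coe_natPerm_blockRotation hab'.le hbc'.le hc']
  have hb : b - 1 = b' - 1 := (uniqueDescentAt_blockRot hab' hbc' _).1
    (hrot ▸ (uniqueDescentAt_blockRot hab hbc _).2 rfl)
  have ha := congrFun hrot b
  have hc := congrFun hrot (b - 1)
  unfold blockRot at ha hc
  split_ifs at ha hc <;> omega

theorem exists_eq_blockRotation {w : Perm (Fin n)} (hw : Bigrassmannian w) :
    ∃ a b c, a < b ∧ b < c ∧ c ≤ n ∧ w = blockRotation n a b c := by
  obtain ⟨⟨e, he⟩, ⟨d, hd⟩⟩ := (bigrassmannian_iff w).1 hw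
  set σ := natPerm w
  have hN : ∀ k, n ≤ k → σ k = k := fun k => natPerm_apply_of_le w
  have hrot := hd.eq_blockRot he hN
  have hdesc := (hd d).2 rfl
  have hdn : d < n := by
    by_contra h
    rw [hN _ (by omega), hN d (by omega)] at hdesc
    omega
  have hσd : σ d < n := natPerm_lt w hdn
  have hblocks : σ (d + 1) < d + 1 ∧ d + 1 < σ d + 1 := by
    have h1 := hrot d
    have h2 := hrot (d + 1)
    unfold blockRot at h1 h2
    split_ifs at h1 h2 <;> omega
  refine ⟨σ (d + 1), d + 1, σ d + 1, hblocks.1, hblocks.2, hσd, natPerm_injective ?_⟩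
  ext k
  rw [coe_natPerm_blockRotation hblocks.1.le hblocks.2.le hσd, hrot]

end BlockRotation

def increasingTriples (m : ℕ) : Finset (ℕ × ℕ × ℕ) :=
  {t ∈ range m ×ˢ range m ×ˢ range m | t.1 < t.2.1 ∧ t.2.1 < t.2.2}

lemma card_bigrassmannian_eq_card_increasingTriples (n : ℕ) :
    Nat.card {w : Perm (Fin n) // Bigrassmannian w} = #(increasingTriples (n + 1)) := by
  classical
  rw [Nat.card_eq_fintype_card, Fintype.card_subtype]
  symm
  refine card_bij (fun t _ => blockRotation n t.1 t.2.1 t.2.2) (fun t ht => ?_)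
    (fun t ht t' ht' h => ?_) (fun w hw => ?_)
  · simp only [increasingTriples, mem_filter, mem_product, mem_range] at ht
    simpa using bigrassmannian_blockRotation ht.2.1 ht.2.2 (by omega)
  · simp only [increasingTriples, mem_filter, mem_product, mem_range] at ht ht'
    obtain ⟨h1, h2, h3⟩ := eq_of_blockRotation_eq ht.2.1 ht.2.2 (by omega) ht'.2.1 ht'.2.2
      (by omega) h
    exact Prod.ext h1 (Prod.ext h2 h3)
  · obtain ⟨a, b, c, hab, hbc, hc, rfl⟩ := exists_eq_blockRotation (mem_filter.1 hw).2
    refine ⟨(a, b, c), ?_, rfl⟩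
    simp only [increasingTriples, mem_filter, mem_product, mem_range]
    omega

lemma orderEmbOfFin_triple {a b c : ℕ} (hab : a < b) (hbc : b < c)
    (h : #({a, b, c} : Finset ℕ) = 3) :
    ⇑(({a, b, c} : Finset ℕ).orderEmbOfFin h) = ![a, b, c] := by
  refine (orderEmbOfFin_unique h (by simp [Fin.forall_fin_succ]) ?_).symm
  simp [Fin.strictMono_iff_lt_succ, Fin.forall_fin_two, hab, hbc]

lemma card_increasingTriples (m : ℕ) : #(increasingTriples m) = m.choose 3 := by
  rw [show m.choose 3 = #((range m).powersetCard 3) by simp]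
  refine card_bij' (fun t _ => {t.1, t.2.1, t.2.2})
    (fun S hS => let e := S.orderEmbOfFin (mem_powersetCard.1 hS).2; (e 0, e 1, e 2))
    (fun t ht => ?_) (fun S hS => ?_) (fun t ht => ?_) (fun S hS => ?_)
  · simp only [increasingTriples, mem_filter, mem_product, mem_range] at ht
    rw [mem_powersetCard, card_eq_three]
    refine ⟨by simp [insert_subset_iff, ht.1], _, _, _, by omega, by omega, by omega, rfl⟩
  · set e := S.orderEmbOfFin (mem_powersetCard.1 hS).2
    have hmem : ∀ i, e i < m := fun i => mem_range.1 ((mem_powersetCard.1 hS).1 (by simp [e]))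
    simp only [increasingTriples, mem_filter, mem_product, mem_range]
    exact ⟨⟨hmem 0, hmem 1, hmem 2⟩, e.strictMono (by decide), e.strictMono (by decide)⟩
  · simp only [increasingTriples, mem_filter] at ht
    simp [orderEmbOfFin_triple ht.2.1 ht.2.2]
  · ext x
    rw [← mem_coe (s := S), ← range_orderEmbOfFin S (mem_powersetCard.1 hS).2]
    simp [-range_orderEmbOfFin, Fin.exists_fin_succ, eq_comm]

lemma succ_choose_three (n : ℕ) : (n + 1).choose 3 = (n - 1) * n * (n + 1) / 6 := by
  rw [Nat.choose_eq_descFactorial_div_factorial]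
  congr 1
  rcases n with _ | n
  · rfl
  · simp only [Nat.descFactorial_succ, Nat.reduceSubDiff, add_tsub_cancel_right, tsub_zero,
      Nat.descFactorial_zero, mul_one]
    ring

theorem stmt0_general (n : ℕ) :
    Nat.card {w : Equiv.Perm (Fin n) // Bigrassmannian w} =
      (n - 1) * n * (n + 1) / 6 := by
  rw [card_bigrassmannian_eq_card_increasingTriples, card_increasingTriples, succ_choose_three]

theorem stmt0 (n : ℕ) (hn : 2 ≤ n) :
    Nat.card {w : Equiv.Perm (Fin n) // Bigrassmannian w} =
      (n - 1) * n * (n + 1) / 6 :=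
  stmt0_general n

end Paper
end

section
/- For every integer n ≥ 2 and every triple (i,j,k) with 1 ≤ i, j ≤ n−1 and 0 ≤ k ≤ min{i−1, j−1, n−1−i, n−1−j}, the essential set of b(i,j,k) is the singleton {(j,i)}, and the co-rank function of b(i,j,k) satisfies t_{b(i,j,k)}(j,i) = k+1. -/
/-!
For `i ≤ j`, multiplying out the word defining `b(i,j,k)` (by induction on `k`, each factor
`s_a ⋯ s_b` being a cycle) gives its one-line notation: `b(i,j,k)` shifts `[i-k, j]` up by `k+1`,
maps `[j+1, j+k+1]` increasingly onto `[i-k, i]` and fixes every other point. The essential set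
and the co-rank at `(j,i)` are read off from this description. For `j < i` the claim follows by
transposition, since inversion swaps the coordinates of the essential set and transposes the
rank function.
-/

namespace Paper

section Act

variable {n : ℕ}

lemma act_of_mem (w : Equiv.Perm (Fin n)) {m : ℕ} (h1 : 1 ≤ m) (h2 : m ≤ n) :
    act w m = ((w ⟨m - 1, by omega⟩ : Fin n) : ℕ) + 1 := by
  rw [act, dif_pos ⟨h1, h2⟩]

lemma act_of_notMem (w : Equiv.Perm (Fin n)) {m : ℕ} (h : ¬(1 ≤ m ∧ m ≤ n)) : act w m = m := by
  rw [act, dif_neg h]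

lemma act_mem_Icc (w : Equiv.Perm (Fin n)) {m : ℕ} (h1 : 1 ≤ m) (h2 : m ≤ n) :
    act w m ∈ Set.Icc 1 n := by
  rw [act_of_mem w h1 h2]
  exact ⟨Nat.succ_le_succ (Nat.zero_le _), (w _).isLt⟩

lemma act_one (m : ℕ) : act (1 : Equiv.Perm (Fin n)) m = m := by
  by_cases h : 1 ≤ m ∧ m ≤ n
  · rw [act_of_mem 1 h.1 h.2]
    simp only [Equiv.Perm.coe_one, id_eq]
    omega
  · exact act_of_notMem 1 h

lemma act_mul (u v : Equiv.Perm (Fin n)) (m : ℕ) : act (u * v) m = act u (act v m) := by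
  by_cases h : 1 ≤ m ∧ m ≤ n
  · obtain ⟨hv1, hv2⟩ := act_mem_Icc v h.1 h.2
    have hv : (⟨act v m - 1, by omega⟩ : Fin n) = v ⟨m - 1, by omega⟩ := by
      ext
      simp only [act_of_mem v h.1 h.2]
      omega
    rw [act_of_mem (u * v) h.1 h.2, act_of_mem u hv1 hv2, hv, Equiv.Perm.mul_apply]
  · rw [act_of_notMem _ h, act_of_notMem _ h, act_of_notMem _ h]

lemma act_inv_act (w : Equiv.Perm (Fin n)) (m : ℕ) : act w⁻¹ (act w m) = m := by
  rw [← act_mul, inv_mul_cancel, act_one]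

lemma act_act_inv (w : Equiv.Perm (Fin n)) (m : ℕ) : act w (act w⁻¹ m) = m := by
  simpa using act_inv_act w⁻¹ m

lemma act_s {a m : ℕ} (ha1 : 1 ≤ a) (ha2 : a ≤ n - 1) (h1 : 1 ≤ m) (h2 : m ≤ n) :
    act (s n a) m = if m = a then a + 1 else if m = a + 1 then a else m := by
  rw [act_of_mem _ h1 h2, s, dif_pos ⟨ha1, by omega⟩, Equiv.swap_apply_def]
  split_ifs <;> simp only [Fin.mk.injEq] at * <;> omega

end Act

lemma ascRun_of_lt {n a b : ℕ} (h : b < a) : ascRun n a b = 1 := by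
  simp [ascRun, show b + 1 - a = 0 by omega]

lemma ascRun_of_le {n a b : ℕ} (h : a ≤ b) : ascRun n a b = s n a * ascRun n (a + 1) b := by
  rw [ascRun, show b + 1 - a = b + 1 - (a + 1) + 1 by omega, List.range_succ_eq_map,
    List.map_cons, List.prod_cons, List.map_map, ascRun]
  congr 3
  funext t
  simp only [Function.comp_apply, add_assoc, add_comm 1 t]

lemma act_ascRun {n a b m : ℕ} (ha : 1 ≤ a) (hab : a ≤ b + 1) (hb : b ≤ n - 1)
    (hm1 : 1 ≤ m) (hm2 : m ≤ n) :
    act (ascRun n a b) m = if a ≤ m ∧ m ≤ b then m + 1 else if m = b + 1 then a else m := by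
  induction h : b + 1 - a generalizing a with
  | zero =>
    rw [ascRun_of_lt (by omega), act_one]
    split_ifs <;> omega
  | succ d ih =>
    rw [ascRun_of_le (by omega), act_mul, ih (by omega) (by omega) (by omega)]
    split_ifs <;> rw [act_s ha (by omega) (by omega) (by omega)] <;> split_ifs <;> omega

lemma bAux_zero (n i j : ℕ) : bAux n i j 0 = ascRun n i j := by
  simp [bAux]

lemma bAux_succ (n i j k : ℕ) :
    bAux n i j (k + 1) = ascRun n i (j + k + 1) * bAux n (i - 1) j k := by
  rw [bAux, List.range_succ_eq_map, List.map_cons, List.prod_cons, List.map_map, bAux]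
  congr 3
  funext m
  simp only [Function.comp_apply]
  congr 1 <;> omega

lemma act_bAux {n i j k m : ℕ} (hki : k + 1 ≤ i) (hij : i ≤ j) (hjn : j + k ≤ n - 1)
    (hm1 : 1 ≤ m) (hm2 : m ≤ n) :
    act (bAux n i j k) m =
      if m < i - k then m else if m ≤ j then m + (k + 1)
      else if m ≤ j + k + 1 then m + i - (j + k + 1) else m := by
  induction k generalizing i with
  | zero =>
    rw [bAux_zero, act_ascRun (by omega) (by omega) (by omega) hm1 hm2]
    split_ifs <;> omega
  | succ k ih =>
    rw [bAux_succ, act_mul, ih (by omega) (by omega) (by omega)]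
    split_ifs <;> rw [act_ascRun (by omega) (by omega) (by omega) (by omega) (by omega)] <;>
      split_ifs <;> omega

lemma act_bAux_inv {n i j k m : ℕ} (hki : k + 1 ≤ i) (hij : i ≤ j) (hjn : j + k ≤ n - 1)
    (hm1 : 1 ≤ m) (hm2 : m ≤ n) :
    act (bAux n i j k)⁻¹ m =
      if m < i - k then m else if m ≤ i then m + (j + k + 1) - i
      else if m ≤ j + k + 1 then m - (k + 1) else m := by
  set m' := if m < i - k then m else if m ≤ i then m + (j + k + 1) - i
      else if m ≤ j + k + 1 then m - (k + 1) else m with hm'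
  have hm'_mem : 1 ≤ m' ∧ m' ≤ n := by
    rw [hm']
    split_ifs <;> omega
  have hm'_act : act (bAux n i j k) m' = m := by
    rw [act_bAux hki hij hjn hm'_mem.1 hm'_mem.2, hm']
    split_ifs <;> omega
  rw [← hm'_act, act_inv_act]

lemma Ess_inv {n : ℕ} (w : Equiv.Perm (Fin n)) : Ess w⁻¹ = Prod.swap ⁻¹' Ess w := by
  ext p
  simp only [Ess, Set.mem_ofPred_eq, Set.mem_preimage, Prod.fst_swap, Prod.snd_swap, inv_inv]
  tauto

lemma rnk_inv {n : ℕ} (w : Equiv.Perm (Fin n)) (i j : ℕ) : rnk w⁻¹ i j = rnk w j i := by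
  refine Finset.card_nbij' (act w⁻¹) (act w) ?_ ?_ (fun m _ => act_act_inv w m)
    (fun m _ => act_inv_act w m)
  all_goals
    intro m hm
    simp only [Finset.coe_filter, Finset.mem_Icc, Set.mem_ofPred_eq] at hm ⊢
    by_cases h : m ≤ n
    · simp only [act_act_inv, act_inv_act]
      have hw := Set.mem_Icc.mp (act_mem_Icc w hm.1.1 h)
      have hw' := Set.mem_Icc.mp (act_mem_Icc w⁻¹ hm.1.1 h)
      omega
    · have hm' : ¬(1 ≤ m ∧ m ≤ n) := by omega
      simp only [act_of_notMem w hm', act_of_notMem w⁻¹ hm'] at hm ⊢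
      omega

lemma cork_inv {n : ℕ} (w : Equiv.Perm (Fin n)) (i j : ℕ) : cork w⁻¹ i j = cork w j i := by
  rw [cork, cork, rnk_inv, min_comm]

lemma Ess_bAux {n i j k : ℕ} (hki : k + 1 ≤ i) (hij : i ≤ j) (hjn : j + k ≤ n - 1) :
    Ess (bAux n i j k) = {(j, i)} := by
  ext ⟨p, q⟩
  simp only [Ess, Set.mem_ofPred_eq, Set.mem_singleton_iff, Prod.mk.injEq]
  constructor
  · rintro ⟨hp1, hp2, hq1, hq2, hq, hp, hp', hq'⟩
    rw [act_bAux_inv hki hij hjn hq1 (by omega)] at hq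
    rw [act_bAux hki hij hjn hp1 (by omega)] at hp
    rw [act_bAux hki hij hjn (by omega) (by omega)] at hp'
    rw [act_bAux_inv hki hij hjn (by omega) (by omega)] at hq'
    constructor
    · split_ifs at hp hp' <;> omega
    · split_ifs at hq hq' <;> omega
  · rintro ⟨rfl, rfl⟩
    refine ⟨by omega, by omega, by omega, by omega, ?_, ?_, ?_, ?_⟩
    · rw [act_bAux_inv hki hij hjn (by omega) (by omega)]
      split_ifs <;> omega
    · rw [act_bAux hki hij hjn (by omega) (by omega)]
      split_ifs <;> omega
    · rw [act_bAux hki hij hjn (by omega) (by omega)]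
      split_ifs <;> omega
    · rw [act_bAux_inv hki hij hjn (by omega) (by omega)]
      split_ifs <;> omega

lemma cork_bAux {n i j k : ℕ} (hki : k + 1 ≤ i) (hij : i ≤ j) (hjn : j + k ≤ n - 1) :
    cork (bAux n i j k) j i = k + 1 := by
  have hrnk : (Finset.Icc 1 j).filter (fun m => act (bAux n i j k) m ≤ i)
      = Finset.Icc 1 (i - k - 1) := by
    ext m
    simp only [Finset.mem_filter, Finset.mem_Icc]
    constructor
    · rintro ⟨⟨hm1, hm2⟩, hle⟩
      rw [act_bAux hki hij hjn hm1 (by omega)] at hle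
      split_ifs at hle <;> omega
    · rintro ⟨hm1, hm2⟩
      refine ⟨⟨hm1, by omega⟩, ?_⟩
      rw [act_bAux hki hij hjn hm1 (by omega)]
      split_ifs <;> omega
  rw [cork, rnk, hrnk, Nat.card_Icc]
  omega

theorem stmt7_general (n : ℕ) (i j k : ℕ)
    (hi1 : 1 ≤ i) (hi2 : i ≤ n - 1) (hj1 : 1 ≤ j) (hj2 : j ≤ n - 1)
    (hk : k ≤ min (min (i - 1) (j - 1)) (min (n - 1 - i) (n - 1 - j))) :
    Ess (b n i j k) = {(j, i)} ∧ cork (b n i j k) j i = k + 1 := by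
  rw [b]
  split_ifs with hij
  · exact ⟨Ess_bAux (by omega) hij (by omega), cork_bAux (by omega) hij (by omega)⟩
  · have hji : j ≤ i := by omega
    rw [Ess_inv, cork_inv, Ess_bAux (by omega) hji (by omega)]
    exact ⟨by ext ⟨p, q⟩; simp [and_comm, eq_comm], cork_bAux (by omega) hji (by omega)⟩

theorem stmt7 (n : ℕ) (hn : 2 ≤ n) (i j k : ℕ)
    (hi1 : 1 ≤ i) (hi2 : i ≤ n - 1) (hj1 : 1 ≤ j) (hj2 : j ≤ n - 1)
    (hk : k ≤ min (min (i - 1) (j - 1)) (min (n - 1 - i) (n - 1 - j))) :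
    Ess (b n i j k) = {(j, i)} ∧ cork (b n i j k) j i = k + 1 :=
  stmt7_general n i j k hi1 hi2 hj1 hj2 hk

end Paper
end
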